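/- arXiv:1804.02322 — 3 statements merged into one kernel-verified Lean document; each statement's English description precedes it below -/
import Mathlib

section
/- Let T be a finite Tarski algebra and Spec(T) its set of maximal (equivalently prime) filters. Then the map σ : T → 𝒫(Spec(T)) defined by σ(x) = {K ∈ Spec(T) : x ∈ K} is injective and satisfies σ(1) = Spec(T) and σ(a·b) = σ(a)ᶜ ∪ σ(b) for all a, b ∈ T; that is, σ is an embedding of T into the Tarski algebra of sets on 𝒫(Spec(T)). -/
/-- A filter (deductive system) of a Tarski algebra: contains `one` and closed
under modus ponens. -/
def IsTFilter {α : Type*} (op : α → α → α) (one : α) (K : Set α) : Prop :=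
  one ∈ K ∧ ∀ a b : α, a ∈ K → op a b ∈ K → b ∈ K

/-- A maximal filter: a proper filter whose only proper extension among filters
is the whole algebra. -/
def IsMaxTFilter {α : Type*} (op : α → α → α) (one : α) (K : Set α) : Prop :=
  IsTFilter op one K ∧ K ≠ Set.univ ∧
    ∀ F : Set α, IsTFilter op one F → K ⊆ F → F = K ∨ F = Set.univ

/-!
If `a·b ≠ 1`, the filter `{x | a·x = 1}` contains `a` but not `b`; in a finite
algebra it extends to a filter `K` maximal among those avoiding `b`. For `c ∉ K` the filter
`{x | c·x ∈ K}` strictly enlarges `K`, so it contains `b`; this forces every `b·y` into `K`,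
whence `K` is a maximal filter. So maximal filters separate `a` from `b` whenever `a ≰ b`,
which gives injectivity, and in a maximal filter `a·b ∈ K ↔ (a ∈ K → b ∈ K)`.
-/

section TarskiAlgebra

variable {α : Type*} {op : α → α → α} {one : α}

lemma tarski_op_one (T2 : ∀ a, op a a = one)
    (T3 : ∀ a b c, op a (op b c) = op (op a b) (op a c)) (a : α) : op a one = one := by
  simpa only [T2] using T3 a a a

lemma tarski_op_op_self (T1 : ∀ a, op one a = a) (T2 : ∀ a, op a a = one)
    (T3 : ∀ a b c, op a (op b c) = op (op a b) (op a c)) (a b : α) :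
    op a (op a b) = op a b := by
  rw [T3, T2, T1]

lemma tarski_op_op_left (T2 : ∀ a, op a a = one)
    (T3 : ∀ a b c, op a (op b c) = op (op a b) (op a c)) (a b : α) :
    op a (op b a) = one := by
  rw [T3, T2, tarski_op_one T2 T3]

lemma tarski_eq_of_op_eq_one (T1 : ∀ a, op one a = a)
    (T4 : ∀ a b, op (op a b) b = op (op b a) a) {a b : α}
    (hab : op a b = one) (hba : op b a = one) : a = b := by
  simpa only [hab, hba, T1] using (T4 a b).symm

lemma isTFilter_singleton_one (T1 : ∀ a, op one a = a) : IsTFilter op one {one} :=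
  ⟨rfl, fun a b ha hab => by rwa [ha, T1] at hab⟩

namespace IsTFilter

variable {K : Set α}

/-- The filter `{x | b·x ∈ K}` is the filter generated by `K` and `b`. -/
lemma preimage_op (T2 : ∀ a, op a a = one)
    (T3 : ∀ a b c, op a (op b c) = op (op a b) (op a c))
    (hK : IsTFilter op one K) (b : α) : IsTFilter op one {x | op b x ∈ K} := by
  refine ⟨by simpa only [Set.mem_ofPred_eq, tarski_op_one T2 T3] using hK.1, ?_⟩
  intro x y hx hxy
  rw [Set.mem_ofPred_eq, T3] at hxy
  exact hK.2 _ _ hx hxy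

lemma self_mem_preimage_op (T2 : ∀ a, op a a = one) (hK : IsTFilter op one K) (b : α) :
    b ∈ {x | op b x ∈ K} := by
  simpa only [Set.mem_ofPred_eq, T2] using hK.1

lemma subset_preimage_op (T2 : ∀ a, op a a = one)
    (T3 : ∀ a b c, op a (op b c) = op (op a b) (op a c))
    (hK : IsTFilter op one K) (b : α) : K ⊆ {x | op b x ∈ K} := fun x hx =>
  hK.2 _ _ hx (by simpa only [tarski_op_op_left T2 T3] using hK.1)

lemma isMaxTFilter_of_maximal (T1 : ∀ a, op one a = a) (T2 : ∀ a, op a a = one)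
    (T3 : ∀ a b c, op a (op b c) = op (op a b) (op a c))
    (T4 : ∀ a b, op (op a b) b = op (op b a) a) {b : α}
    (hK : Maximal (fun F => IsTFilter op one F ∧ b ∉ F) K) : IsMaxTFilter op one K := by
  obtain ⟨⟨hKfil, hbK⟩, hKmax⟩ := hK
  have op_mem_of_not_mem : ∀ c, c ∉ K → op c b ∈ K := by
    intro c hc
    by_contra hcb
    exact hc (hKmax ⟨hKfil.preimage_op T2 T3 c, hcb⟩ (hKfil.subset_preimage_op T2 T3 c)
      (hKfil.self_mem_preimage_op T2 c))
  have op_left_mem : ∀ y, op b y ∈ K := by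
    intro y
    by_contra hby
    have hcancel : op (op (op b y) b) b = one := by
      rw [T4, tarski_op_op_self T1 T2 T3, T2]
    exact hbK (hKfil.2 _ _ (op_mem_of_not_mem _ hby) (hcancel ▸ hKfil.1))
  refine ⟨hKfil, fun h => hbK (h ▸ Set.mem_univ b), fun F hF hKF => ?_⟩
  refine or_iff_not_imp_left.2 fun hFK => ?_
  obtain ⟨c, hcF, hcK⟩ := Set.not_subset.1 fun hFK' => hFK (hFK'.antisymm hKF)
  have hbF : b ∈ F := hF.2 c b hcF (hKF (op_mem_of_not_mem c hcK))
  exact Set.eq_univ_of_forall fun y => hF.2 b y hbF (hKF (op_left_mem y))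

end IsTFilter

lemma IsMaxTFilter.op_mem_iff (T2 : ∀ a, op a a = one)
    (T3 : ∀ a b c, op a (op b c) = op (op a b) (op a c))
    {K : Set α} (hK : IsMaxTFilter op one K) (a b : α) :
    op a b ∈ K ↔ (a ∈ K → b ∈ K) := by
  refine ⟨fun hab ha => hK.1.2 a b ha hab, fun himp => ?_⟩
  by_cases ha : a ∈ K
  · exact hK.1.2 b _ (himp ha) (by simpa only [tarski_op_op_left T2 T3] using hK.1.1)
  · rcases hK.2.2 _ (hK.1.preimage_op T2 T3 a) (hK.1.subset_preimage_op T2 T3 a) with h | h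
    · exact absurd (h ▸ hK.1.self_mem_preimage_op T2 a) ha
    · exact Set.eq_univ_iff_forall.1 h b

lemma tarski_op_eq_one_of_forall_isMaxTFilter [Finite α] (T1 : ∀ a, op one a = a)
    (T2 : ∀ a, op a a = one) (T3 : ∀ a b c, op a (op b c) = op (op a b) (op a c))
    (T4 : ∀ a b, op (op a b) b = op (op b a) a) {a b : α}
    (h : ∀ K, IsMaxTFilter op one K → a ∈ K → b ∈ K) : op a b = one := by
  by_contra hab
  have hone := isTFilter_singleton_one T1
  obtain ⟨K, hPK, hKmax⟩ := Finite.exists_le_maximal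
    (p := fun F => IsTFilter op one F ∧ b ∉ F) ⟨hone.preimage_op T2 T3 a, hab⟩
  exact hKmax.prop.2 (h K (IsTFilter.isMaxTFilter_of_maximal T1 T2 T3 T4 hKmax)
    (hPK (hone.self_mem_preimage_op T2 a)))

end TarskiAlgebra

/-- For a finite Tarski algebra `T`, the map `σ : T → 𝒫(Spec T)`,
`σ(x) = {K ∈ Spec T : x ∈ K}`, is injective, sends `1` to `Spec T`, and satisfies
`σ(a·b) = σ(a)ᶜ ∪ σ(b)`: an embedding into the Tarski algebra of sets. -/
theorem finite_tarski_spec_embedding {α : Type*} [Finite α]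
    (op : α → α → α) (one : α)
    (T1 : ∀ a, op one a = a) (T2 : ∀ a, op a a = one)
    (T3 : ∀ a b c, op a (op b c) = op (op a b) (op a c))
    (T4 : ∀ a b, op (op a b) b = op (op b a) a) :
    let Spec := {K : Set α // IsMaxTFilter op one K}
    let σ : α → Set Spec := fun x => {K : Spec | x ∈ K.1}
    Function.Injective σ ∧
    σ one = Set.univ ∧
    (∀ a b : α, σ (op a b) = (σ a)ᶜ ∪ σ b) := by
  intro Spec σ
  have op_eq_one_of_subset : ∀ {a b}, σ a ⊆ σ b → op a b = one := fun hab =>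
    tarski_op_eq_one_of_forall_isMaxTFilter T1 T2 T3 T4 fun K hK ha => hab (a := ⟨K, hK⟩) ha
  refine ⟨fun a b hab => ?_, ?_, fun a b => ?_⟩
  · exact tarski_eq_of_op_eq_one T1 T4 (op_eq_one_of_subset hab.le) (op_eq_one_of_subset hab.ge)
  · exact Set.eq_univ_of_forall fun K => K.2.1.1
  · ext K
    simp only [σ, Set.mem_ofPred_eq, Set.mem_union, Set.mem_compl_iff, K.2.op_mem_iff T2 T3,
      imp_iff_not_or]
end

section
/- Let (X, 𝒮) be a finite dense Tarski set (a finite covering approximation space, i.e., ⋃𝒮 = X and 𝒮 nonempty). Then the map ξ : X → Spec(Δ(X)) defined by ξ(x) = {U ∈ Δ(X) : x ∈ U} is well defined (each ξ(x) is a maximal proper filter of the Tarski algebra Δ(X)) and is a bijection of X onto Spec(Δ(X)). -/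
/-- The dual of a Tarski set `(X, 𝒮)`:
`Δ(X) = {U ⊆ X : ∃ W ∈ 𝒮, ∃ H ⊆ W, U = Wᶜ ∪ H}`. -/
def TDelta {X : Type*} (𝒮 : Set (Set X)) : Set (Set X) :=
  {U | ∃ W ∈ 𝒮, ∃ H ⊆ W, U = Wᶜ ∪ H}

/-- A filter of the Tarski algebra of sets `Δ` (with operation `A·B = Aᶜ ∪ B`
and constant `X = univ`): a subset of `Δ` containing `univ` and closed under
modus ponens within `Δ`. -/
def IsDFilter {X : Type*} (Δ : Set (Set X)) (K : Set (Set X)) : Prop :=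
  K ⊆ Δ ∧ Set.univ ∈ K ∧ ∀ A ∈ K, ∀ B ∈ Δ, Aᶜ ∪ B ∈ K → B ∈ K

/-- A maximal proper filter of the Tarski algebra `Δ`. -/
def IsMaxDFilter {X : Type*} (Δ : Set (Set X)) (K : Set (Set X)) : Prop :=
  IsDFilter Δ K ∧ K ≠ Δ ∧ ∀ F : Set (Set X), IsDFilter Δ F → K ⊆ F → F = K ∨ F = Δ


/-!
Every `U ∈ Δ(X)` contains some complement `Wᶜ` with `W ∈ 𝒮`, so `Δ(X)` is an upper set of `Set X`,
and density puts every co-singleton `{x}ᶜ` into `Δ(X)`. The point filter `ξ(x)` is maximal because any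
`U ∉ ξ(x)` yields `Uᶜ ∪ B ∈ ξ(x)` for every `B ∈ Δ(X)`, and it separates points via `{x}ᶜ`.
Conversely, a proper filter `K` of a finite `Δ(X)` has a point `x` in `⋂₀ K`: otherwise iterated
modus ponens would put every element of `Δ(X)` into `K`. Then `K ⊆ ξ(x)`, and maximality of `K`
gives `K = ξ(x)`.
-/

open Set

def pointDFilter {X : Type*} (Δ : Set (Set X)) (x : X) : Set (Set X) :=
  {U | U ∈ Δ ∧ x ∈ U}

section TDelta

variable {X : Type*} {𝒮 : Set (Set X)}

theorem isUpperSet_TDelta : IsUpperSet (TDelta 𝒮) := by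
  rintro U C hUC ⟨W, hW, H, -, rfl⟩
  refine ⟨W, hW, C ∩ W, inter_subset_right, ?_⟩
  ext y
  by_cases hy : y ∈ W
  · simp [hy]
  · simpa [hy] using hUC (Or.inl hy)

theorem univ_mem_TDelta (h𝒮 : 𝒮.Nonempty) : univ ∈ TDelta 𝒮 := by
  obtain ⟨W, hW⟩ := h𝒮
  exact ⟨W, hW, W, subset_rfl, (compl_union_self W).symm⟩

theorem compl_singleton_mem_TDelta (hdense : ⋃₀ 𝒮 = univ) (x : X) : {x}ᶜ ∈ TDelta 𝒮 := by
  obtain ⟨W, hW, hxW⟩ : x ∈ ⋃₀ 𝒮 := hdense ▸ mem_univ x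
  refine ⟨W, hW, W \ {x}, sdiff_subset, ?_⟩
  ext y; by_cases hy : y = x <;> simp [hy, hxW, or_iff_not_imp_left]

end TDelta

section DFilter

variable {X : Type*} {Δ K : Set (Set X)}

theorem isDFilter_pointDFilter (huniv : univ ∈ Δ) (x : X) : IsDFilter Δ (pointDFilter Δ x) := by
  refine ⟨fun U hU => hU.1, ⟨huniv, trivial⟩, ?_⟩
  rintro A ⟨-, hxA⟩ B hB ⟨-, hxAB⟩
  exact ⟨hB, hxAB.resolve_left (not_not_intro hxA)⟩

theorem pointDFilter_ne (x : X) (hx : {x}ᶜ ∈ Δ) : pointDFilter Δ x ≠ Δ := by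
  intro h
  rw [← h] at hx
  exact hx.2 rfl

theorem eq_of_pointDFilter_subset (hΔ : IsUpperSet Δ) {x : X} {F : Set (Set X)}
    (hF : IsDFilter Δ F) (hxF : pointDFilter Δ x ⊆ F) :
    F = pointDFilter Δ x ∨ F = Δ := by
  obtain ⟨hFΔ, -, hFmp⟩ := hF
  by_cases h : ∃ U ∈ F, x ∉ U
  · obtain ⟨U, hUF, hxU⟩ := h
    refine Or.inr (subset_antisymm hFΔ fun B hB => hFmp U hUF B hB (hxF ?_))
    exact ⟨hΔ subset_union_right hB, Or.inl hxU⟩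
  · push Not at h
    exact Or.inl (subset_antisymm (fun U hU => ⟨hFΔ hU, h U hU⟩) hxF)

theorem isMaxDFilter_pointDFilter (hΔ : IsUpperSet Δ) (huniv : univ ∈ Δ) (x : X)
    (hx : {x}ᶜ ∈ Δ) : IsMaxDFilter Δ (pointDFilter Δ x) :=
  ⟨isDFilter_pointDFilter huniv x, pointDFilter_ne x hx,
    fun _ hF hxF => eq_of_pointDFilter_subset hΔ hF hxF⟩

theorem pointDFilter_injective (hpt : ∀ x : X, {x}ᶜ ∈ Δ) :
    Function.Injective (pointDFilter Δ) := by
  intro x y hxy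
  by_contra hne
  have hx : {x}ᶜ ∈ pointDFilter Δ y := ⟨hpt x, Ne.symm hne⟩
  exact (hxy ▸ hx).2 rfl

theorem IsDFilter.mem_of_sInter_subset (hΔ : IsUpperSet Δ) (hK : IsDFilter Δ K)
    {T : Set (Set X)} (hT : T.Finite) (hTK : T ⊆ K) {B : Set X} (hB : B ∈ Δ)
    (hTB : ⋂₀ T ⊆ B) : B ∈ K := by
  induction T, hT using Set.Finite.induction_on generalizing B with
  | empty =>
    rw [sInter_empty, univ_subset_iff] at hTB
    exact hTB ▸ hK.2.1
  | @insert A T _ _ ih =>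
    rw [insert_subset_iff] at hTK
    rw [sInter_insert] at hTB
    have hAB : ⋂₀ T ⊆ Aᶜ ∪ B := fun y hy =>
      (em (y ∈ A)).elim (fun hyA => Or.inr (hTB ⟨hyA, hy⟩)) Or.inl
    exact hK.2.2 A hTK.1 B hB (ih hTK.2 (hΔ subset_union_right hB) hAB)

theorem IsMaxDFilter.sInter_nonempty [Finite X] (hΔ : IsUpperSet Δ) (hK : IsMaxDFilter Δ K) :
    (⋂₀ K).Nonempty := by
  obtain ⟨hKfil, hKne, -⟩ := hK
  refine nonempty_iff_ne_empty.2 fun hempty => hKne (subset_antisymm hKfil.1 fun B hB => ?_)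
  exact hKfil.mem_of_sInter_subset hΔ (toFinite K) subset_rfl hB (hempty ▸ empty_subset B)

theorem IsMaxDFilter.exists_pointDFilter_eq [Finite X] (hΔ : IsUpperSet Δ) (huniv : univ ∈ Δ)
    (hpt : ∀ x : X, {x}ᶜ ∈ Δ) (hK : IsMaxDFilter Δ K) : ∃ x, pointDFilter Δ x = K := by
  obtain ⟨x, hx⟩ := hK.sInter_nonempty hΔ
  refine ⟨x, ?_⟩
  have hKx : K ⊆ pointDFilter Δ x := fun U hU => ⟨hK.1.1 hU, hx U hU⟩
  exact (hK.2.2 _ (isDFilter_pointDFilter huniv x) hKx).resolve_right (pointDFilter_ne x (hpt x))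

end DFilter

theorem finite_dense_tarskiSet_spec_bijection_general {X : Type*} [Finite X]
    (𝒮 : Set (Set X)) (h𝒮 : 𝒮.Nonempty) (hdense : ⋃₀ 𝒮 = Set.univ) :
    let ξ : X → Set (Set X) := fun x => {U | U ∈ TDelta 𝒮 ∧ x ∈ U}
    (∀ x : X, IsMaxDFilter (TDelta 𝒮) (ξ x)) ∧
    Function.Injective ξ ∧
    (∀ K : Set (Set X), IsMaxDFilter (TDelta 𝒮) K → ∃ x : X, ξ x = K) := by
  have hpt := compl_singleton_mem_TDelta hdense
  exact ⟨fun x => isMaxDFilter_pointDFilter isUpperSet_TDelta (univ_mem_TDelta h𝒮) x (hpt x),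
    pointDFilter_injective hpt,
    fun _ hK => hK.exists_pointDFilter_eq isUpperSet_TDelta (univ_mem_TDelta h𝒮) hpt⟩

/-- For a finite dense Tarski set (covering approximation space) `(X, 𝒮)`, the map
`ξ(x) = {U ∈ Δ(X) : x ∈ U}` is well defined into `Spec(Δ(X))` and is a bijection
of `X` onto `Spec(Δ(X))`. -/
theorem finite_dense_tarskiSet_spec_bijection {X : Type*} [Finite X] [Nonempty X]
    (𝒮 : Set (Set X)) (h𝒮 : 𝒮.Nonempty) (hdense : ⋃₀ 𝒮 = Set.univ) :
    let ξ : X → Set (Set X) := fun x => {U | U ∈ TDelta 𝒮 ∧ x ∈ U}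
    (∀ x : X, IsMaxDFilter (TDelta 𝒮) (ξ x)) ∧
    Function.Injective ξ ∧
    (∀ K : Set (Set X), IsMaxDFilter (TDelta 𝒮) K → ∃ x : X, ξ x = K) :=
  finite_dense_tarskiSet_spec_bijection_general 𝒮 h𝒮 hdense
end

section
/- Let T be a tolerance (reflexive, symmetric relation) on a set S and let δ(S) = {⋃H : H ⊆ 𝒯} be the collection of definable objects. Then ∅ ∈ δ(S) and S ∈ δ(S), and δ(S) is closed under arbitrary unions and arbitrary intersections; hence δ(S) is a complete ring of subsets of S (an Alexandrov topology on S). -/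
/-- A block of a tolerance `T`: a maximal subset `B` with `B × B ⊆ T`. -/
def IsBlock {S : Type*} (T : S → S → Prop) (B : Set S) : Prop :=
  (∀ a ∈ B, ∀ b ∈ B, T a b) ∧
    ∀ C : Set S, B ⊆ C → (∀ a ∈ C, ∀ b ∈ C, T a b) → C = B

/-- Squeezed blocks: intersections of nonempty families of blocks. -/
def sqBlocks {S : Type*} (T : S → S → Prop) : Set (Set S) :=
  {A | ∃ Γ : Set (Set S), Γ.Nonempty ∧ (∀ B ∈ Γ, IsBlock T B) ∧ A = ⋂₀ Γ}

/-- The definable objects: unions of families of squeezed blocks. -/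
def defObj {S : Type*} (T : S → S → Prop) : Set (Set S) :=
  {U | ∃ H ⊆ sqBlocks T, U = ⋃₀ H}

/-!
Let `N x` be the intersection of all blocks containing `x`. Since every point lies in a block,
`N x` is a squeezed block, and it is the smallest squeezed block containing `x`. Hence a set is
definable exactly when it contains `N x` together with each of its points, and this condition
is visibly stable under arbitrary unions and intersections.
-/

section Tolerance

variable {S : Type*} {T : S → S → Prop}

theorem exists_isBlock_superset {C : Set S} (hC : ∀ a ∈ C, ∀ b ∈ C, T a b) :
    ∃ B, IsBlock T B ∧ C ⊆ B := by
  obtain ⟨B, hCB, hmax⟩ := zorn_subset_nonempty {D : Set S | ∀ a ∈ D, ∀ b ∈ D, T a b}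
    (fun c hc hchain _ => by
      refine ⟨⋃₀ c, ?_, fun D hD => Set.subset_sUnion_of_mem hD⟩
      rintro a ⟨D₁, hD₁, ha⟩ b ⟨D₂, hD₂, hb⟩
      rcases hchain.total hD₁ hD₂ with h | h
      · exact hc hD₂ a (h ha) b hb
      · exact hc hD₁ a ha b (h hb))
    C hC
  exact ⟨B, ⟨hmax.prop, fun D hBD hD => (hmax.eq_of_subset hD hBD).symm⟩, hCB⟩

theorem exists_isBlock_mem {x : S} (hx : T x x) : ∃ B, IsBlock T B ∧ x ∈ B := by
  obtain ⟨B, hB, hxB⟩ := exists_isBlock_superset (C := {x}) (by simpa using hx)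
  exact ⟨B, hB, hxB rfl⟩

variable (T) in
def blockNbhd (x : S) : Set S :=
  ⋂₀ {B | IsBlock T B ∧ x ∈ B}

theorem mem_blockNbhd (x : S) : x ∈ blockNbhd T x :=
  fun _ hB => hB.2

theorem blockNbhd_mem_sqBlocks {x : S} (hx : T x x) : blockNbhd T x ∈ sqBlocks T := by
  obtain ⟨B, hB⟩ := exists_isBlock_mem hx
  exact ⟨_, ⟨B, hB⟩, fun _ hB' => hB'.1, rfl⟩

theorem blockNbhd_subset_of_mem_sqBlocks {A : Set S} {x : S} (hA : A ∈ sqBlocks T)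
    (hx : x ∈ A) : blockNbhd T x ⊆ A := by
  obtain ⟨Γ, -, hΓ, rfl⟩ := hA
  exact Set.sInter_subset_sInter fun B hB => ⟨hΓ B hB, hx B hB⟩

theorem mem_defObj_iff (hrefl : ∀ a, T a a) {U : Set S} :
    U ∈ defObj T ↔ ∀ x ∈ U, blockNbhd T x ⊆ U := by
  constructor
  · rintro ⟨H, hH, rfl⟩ x ⟨A, hAH, hxA⟩
    exact (blockNbhd_subset_of_mem_sqBlocks (hH hAH) hxA).trans (Set.subset_sUnion_of_mem hAH)
  · intro hU
    refine ⟨Set.range fun x : U => blockNbhd T x, ?_, ?_⟩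
    · rintro _ ⟨x, rfl⟩
      exact blockNbhd_mem_sqBlocks (hrefl x)
    · rw [Set.sUnion_range]
      exact subset_antisymm (fun x hx => Set.mem_iUnion.2 ⟨⟨x, hx⟩, mem_blockNbhd x⟩)
        (Set.iUnion_subset fun x => hU x x.2)

end Tolerance

theorem defObj_complete_ring_general {S : Type*} (T : S → S → Prop)
    (hrefl : ∀ a, T a a) :
    ∅ ∈ defObj T ∧ Set.univ ∈ defObj T ∧
    (∀ F ⊆ defObj T, ⋃₀ F ∈ defObj T) ∧
    (∀ F : Set (Set S), F ⊆ defObj T → ⋂₀ F ∈ defObj T) := by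
  simp only [Set.subset_def, mem_defObj_iff hrefl]
  refine ⟨by simp, by simp, ?_, ?_⟩
  · rintro F hF x ⟨U, hUF, hxU⟩ y hy
    exact ⟨U, hUF, hF U hUF x hxU y hy⟩
  · intro F hF x hx y hy U hUF
    exact hF U hUF x (hx U hUF) y hy

/-- For a tolerance `T` on `S`, the collection of definable objects `δ(S)` contains
`∅` and `S` and is closed under arbitrary unions and arbitrary intersections:
it is a complete ring of subsets of `S` (an Alexandrov topology). -/
theorem defObj_complete_ring {S : Type*} (T : S → S → Prop)
    (hrefl : ∀ a, T a a) (hsymm : ∀ a b, T a b → T b a) :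
    ∅ ∈ defObj T ∧ Set.univ ∈ defObj T ∧
    (∀ F ⊆ defObj T, ⋃₀ F ∈ defObj T) ∧
    (∀ F : Set (Set S), F ⊆ defObj T → ⋂₀ F ∈ defObj T) :=
  defObj_complete_ring_general T hrefl
end
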